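/- arXiv:2404.17421 — 3 statements merged into one kernel-verified Lean document; each statement's English description precedes it below -/
import Mathlib

section
/- Let Q be a nonempty finite set, S and S' nonempty sets, and f : S' → S a surjection such that f⁻¹(s) is infinite for every s ∈ S. Let T_∃ = {A_1,...,A_n} and T_∀ be finite sets of subsets of Q. Let θ=(T_∃,T_∀) be the basic formula with distinctness: there exist pairwise distinct x_1,...,x_n with A_i ⊆ I(x_i) for each i, and every y distinct from all x_i satisfies B ⊆ I(y) for some B ∈ T_∀. Let θ(T_∃,T_∀) be the symmetric basic formula without the distinctness requirements (witnesses need not be distinct, and the universal condition applies to all y). Then for every one-step interpretation (S, I) over Q: (S, I) ⊨ θ(T_∃,T_∀) if and only if (S', I ∘ f) ⊨ θ=(T_∃,T_∀). -/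
/-- The symmetric basic formula `θ(T_∃,T_∀)` (no distinctness) over `(S, I)`.
`A : Fin n → Set Q` lists the existential types of `T_∃`. -/
def SymBasic {Q S : Type} (n : ℕ) (A : Fin n → Set Q) (Tforall : Finset (Set Q))
    (I : S → Set Q) : Prop :=
  (∃ x : Fin n → S, ∀ i, A i ⊆ I (x i)) ∧ ∀ y : S, ∃ B ∈ Tforall, B ⊆ I y

/-- The basic formula `θ=(T_∃,T_∀)` with distinctness over `(S', I')`:
pairwise distinct witnesses `x_1, ..., x_n` realizing the types `A_i`, and every
element distinct from all witnesses realizes some type of `T_∀`. -/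
def EqBasic {Q S : Type} (n : ℕ) (A : Fin n → Set Q) (Tforall : Finset (Set Q))
    (I : S → Set Q) : Prop :=
  ∃ x : Fin n → S, Function.Injective x ∧ (∀ i, A i ⊆ I (x i)) ∧
    ∀ y : S, (∀ i, y ≠ x i) → ∃ B ∈ Tforall, B ⊆ I y

/-!
Pulling back along `f` does not change which types an element realizes, so only the
distinctness clauses of `θ=` need an argument. Since every fiber is infinite, the
witnesses of `θ` lift to pairwise distinct witnesses in `S'`, and conversely every
`s ∈ S` has a preimage outside the finitely many witnesses of `θ=`, to which the
universal clause of `θ=` applies.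
-/

theorem Function.exists_injective_lift_of_infinite_fibers {ι S S' : Type*} [Countable ι]
    {f : S' → S} (hfib : ∀ s, (f ⁻¹' {s}).Infinite) (x : ι → S) :
    ∃ x' : ι → S', Function.Injective x' ∧ ∀ i, f (x' i) = x i := by
  obtain ⟨k, hk⟩ := Countable.exists_injective_nat ι
  have emb (s : S) : ι ↪ f ⁻¹' {s} :=
    haveI := (hfib s).to_subtype
    (Function.Embedding.mk k hk).trans (Infinite.natEmbedding _)
  have hf (i : ι) : f (emb (x i) i) = x i := (emb (x i) i).2
  refine ⟨fun i => emb (x i) i, fun i j hij => ?_, hf⟩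
  have hxij : x i = x j := by rw [← hf i, ← hf j]; exact congrArg f hij
  dsimp only at hij
  rw [hxij] at hij
  exact (emb (x j)).injective (Subtype.ext hij)

theorem SymBasic.eqBasic_comp {Q S S' : Type} {f : S' → S}
    (hfib : ∀ s, (f ⁻¹' {s}).Infinite) {n : ℕ} {A : Fin n → Set Q}
    {Tforall : Finset (Set Q)} {I : S → Set Q} (h : SymBasic n A Tforall I) :
    EqBasic n A Tforall (I ∘ f) := by
  obtain ⟨⟨x, hx⟩, hall⟩ := h
  obtain ⟨x', hinj, hfx'⟩ := Function.exists_injective_lift_of_infinite_fibers hfib x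
  refine ⟨x', hinj, fun i => ?_, fun y _ => hall (f y)⟩
  rw [Function.comp_apply, hfx']
  exact hx i

theorem EqBasic.symBasic_of_comp {Q S S' : Type} {f : S' → S}
    (hfib : ∀ s, (f ⁻¹' {s}).Infinite) {n : ℕ} {A : Fin n → Set Q}
    {Tforall : Finset (Set Q)} {I : S → Set Q} (h : EqBasic n A Tforall (I ∘ f)) :
    SymBasic n A Tforall I := by
  obtain ⟨x, -, hx, hall⟩ := h
  refine ⟨⟨f ∘ x, hx⟩, fun s => ?_⟩
  obtain ⟨y, hys, hyx⟩ := (hfib s).exists_notMem_finite (Set.finite_range x)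
  rw [← Set.mem_singleton_iff.mp hys]
  exact hall y fun i hyi => hyx ⟨i, hyi.symm⟩

theorem stmt4_general {Q S S' : Type}
    (f : S' → S)
    (hfib : ∀ s : S, (f ⁻¹' {s}).Infinite)
    (n : ℕ) (A : Fin n → Set Q) (Tforall : Finset (Set Q)) (I : S → Set Q) :
    SymBasic n A Tforall I ↔ EqBasic n A Tforall (I ∘ f) :=
  ⟨SymBasic.eqBasic_comp hfib, EqBasic.symBasic_of_comp hfib⟩

/-- For a surjection `f : S' → S` with all fibers infinite,
`(S, I) ⊨ θ(T_∃,T_∀)` iff `(S', I ∘ f) ⊨ θ=(T_∃,T_∀)`. -/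
theorem stmt4 {Q S S' : Type} [Nonempty Q] [Finite Q] [Nonempty S] [Nonempty S']
    (f : S' → S) (hsurj : Function.Surjective f)
    (hfib : ∀ s : S, (f ⁻¹' {s}).Infinite)
    (n : ℕ) (A : Fin n → Set Q) (Tforall : Finset (Set Q)) (I : S → Set Q) :
    SymBasic n A Tforall I ↔ EqBasic n A Tforall (I ∘ f) :=
  stmt4_general f hfib n A Tforall I
end

section
/- Let G = (V, E) be an acyclic leveled directed graph with V ⊆ ℕ × Q for Q finite, edges from level i to level i+1 only, all vertices reachable from the unique level-0 initial vertex, and Acc ⊆ V. Suppose every infinite path of G visits Acc infinitely often. Then there exists an infinite strictly increasing sequence of levels ℓ_0 = 0 < ℓ_1 < ℓ_2 < ... such that for every i ≥ 0, every finite path of G starting at a vertex of level ℓ_i + 1 and ending at a vertex of level ℓ_{i+1} visits some vertex in Acc. -/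
/-!
For every level `K` there is a later level `L` such that every path from level `K + 1` to
level `L` meets `Acc`; iterating `K ↦ L` from `0` gives the sequence. If no such `L` existed,
then, level `K + 1` being finite, a single vertex there would start `Acc`-avoiding paths of every
length. By König's lemma (each vertex has finitely many successors, all on the next level) it
starts an infinite `Acc`-avoiding path, and prefixing a path from the initial vertex yields an
infinite path from `init` that visits `Acc` only finitely often.
-/

open Filter Relation

lemma exists_mem_forall_of_finite {β : Type*} {S : Set β} (hS : S.Finite) {P : β → ℕ → Prop}
    (hP : ∀ v, Antitone (P v)) (h : ∀ n, ∃ v ∈ S, P v n) : ∃ v ∈ S, ∀ n, P v n := by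
  obtain ⟨v, hv, hfreq⟩ := hS.frequently_exists.1 (Frequently.of_forall (f := atTop) h)
  refine ⟨v, hv, fun n => ?_⟩
  obtain ⟨m, hnm, hm⟩ := frequently_atTop.1 hfreq n
  exact hP v hnm hm

lemma finite_setOf_fst_eq {Q : Type*} [Finite Q] (n : ℕ) : {v : ℕ × Q | v.1 = n}.Finite :=
  ((Set.finite_singleton n).prod Set.finite_univ).subset fun _ hv => ⟨hv, trivial⟩

section Walks

variable {α : Type*} {r : α → α → Prop}

lemma level_eq_add_of_walk {lev : α → ℕ} (hlev : ∀ a b, r a b → lev b = lev a + 1) {p : ℕ → α} :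
    ∀ {m : ℕ}, (∀ k < m, r (p k) (p (k + 1))) → lev (p m) = lev (p 0) + m
  | 0, _ => rfl
  | m + 1, hp => by
    rw [hlev _ _ (hp m m.lt_succ_self), level_eq_add_of_walk hlev fun k hk => hp k (by omega)]
    rfl

lemma exists_chain_of_forall_exists {s : Set α} (hs : ∀ x ∈ s, ∃ y, r x y ∧ y ∈ s) {a : α}
    (ha : a ∈ s) : ∃ f : ℕ → α, f 0 = a ∧ (∀ k, f k ∈ s) ∧ ∀ k, r (f k) (f (k + 1)) := by
  choose next hnext hnext_mem using fun x : s => hs x x.2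
  let step : s → s := fun x => ⟨next x, hnext_mem x⟩
  refine ⟨fun k => (step^[k] ⟨a, ha⟩).1, rfl, fun k => (step^[k] _).2, fun k => ?_⟩
  simp only [Function.iterate_succ_apply']
  exact hnext _

lemma exists_chain_of_reflTransGen {a b : α} (hab : ReflTransGen r a b) {f : ℕ → α}
    (hf0 : f 0 = b) (hf : ∀ k, r (f k) (f (k + 1))) :
    ∃ g : ℕ → α, g 0 = a ∧ (∀ k, r (g k) (g (k + 1))) ∧ ∃ N, ∀ k, g (k + N) = f k := by
  induction hab using ReflTransGen.head_induction_on with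
  | refl => exact ⟨f, hf0, hf, 0, fun _ => rfl⟩
  | @head a c hac _ ih =>
    obtain ⟨g, hg0, hg, N, hN⟩ := ih
    refine ⟨fun | 0 => _ | k + 1 => g k, rfl, ?_, N + 1, hN⟩
    rintro (_ | k)
    · show r a (g 0)
      exact hg0 ▸ hac
    · exact hg k

variable (r) in
def HasAvoidingWalk (A : Set α) (v : α) (n : ℕ) : Prop :=
  ∃ p : ℕ → α, p 0 = v ∧ (∀ k < n, r (p k) (p (k + 1))) ∧ ∀ k ≤ n, p k ∉ A

namespace HasAvoidingWalk

variable {A : Set α} {v : α}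

lemma antitone : Antitone (HasAvoidingWalk r A v) :=
  fun _ _ hmn ⟨p, hp0, hp, hpA⟩ =>
    ⟨p, hp0, fun k hk => hp k (by omega), fun k hk => hpA k (by omega)⟩

lemma notMem {n : ℕ} (hv : HasAvoidingWalk r A v n) : v ∉ A := by
  obtain ⟨p, rfl, -, hpA⟩ := hv
  exact hpA 0 n.zero_le

lemma exists_rel {n : ℕ} (hv : HasAvoidingWalk r A v (n + 1)) :
    ∃ w, r v w ∧ HasAvoidingWalk r A w n := by
  obtain ⟨p, rfl, hp, hpA⟩ := hv
  exact ⟨p 1, hp 0 n.succ_pos, fun k => p (k + 1), rfl,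
    fun k hk => hp (k + 1) (by omega), fun k hk => hpA (k + 1) (by omega)⟩

lemma exists_rel_forall (hfin : {w | r v w}.Finite) (hv : ∀ n, HasAvoidingWalk r A v n) :
    ∃ w, r v w ∧ ∀ n, HasAvoidingWalk r A w n :=
  exists_mem_forall_of_finite hfin (fun _ => antitone) fun n => (hv (n + 1)).exists_rel

lemma exists_chain (hfin : ∀ v, {w | r v w}.Finite) (hv : ∀ n, HasAvoidingWalk r A v n) :
    ∃ f : ℕ → α, f 0 = v ∧ (∀ k, r (f k) (f (k + 1))) ∧ ∀ k, f k ∉ A := by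
  obtain ⟨f, hf0, hf_good, hf⟩ := exists_chain_of_forall_exists
    (s := {v | ∀ n, HasAvoidingWalk r A v n}) (fun x hx => exists_rel_forall (hfin x) hx) hv
  exact ⟨f, hf0, hf, fun k => (hf_good k 0).notMem⟩

end HasAvoidingWalk

end Walks

theorem exists_level_forall_walk_meets {Q : Type} [Finite Q]
    (V : Set (ℕ × Q)) (E : Set ((ℕ × Q) × (ℕ × Q)))
    (hlev : ∀ e ∈ E, e.2.1 = e.1.1 + 1) (init : ℕ × Q)
    (hreach : ∀ v ∈ V, ReflTransGen (fun a b => (a, b) ∈ E) init v) (Acc : Set (ℕ × Q))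
    (h : ∀ p : ℕ → ℕ × Q, p 0 = init → (∀ k, (p k, p (k + 1)) ∈ E) →
      {k | p k ∈ Acc}.Infinite) (K : ℕ) :
    ∃ L, K < L ∧ ∀ m : ℕ, ∀ p : ℕ → ℕ × Q, p 0 ∈ V → (p 0).1 = K + 1 →
      (∀ k < m, (p k, p (k + 1)) ∈ E) → (p m).1 = L → ∃ k ≤ m, p k ∈ Acc := by
  by_contra! hcon
  have hlev' : ∀ a b, (a, b) ∈ E → b.1 = a.1 + 1 := fun a b hab => hlev (a, b) hab
  have hwalks : ∀ n, ∃ v ∈ {v | v ∈ V ∧ v.1 = K + 1},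
      HasAvoidingWalk (fun a b => (a, b) ∈ E) Acc v n := by
    intro n
    obtain ⟨m, p, hpV, hp0, hp, hpm, hpA⟩ := hcon (K + 1 + n) (by omega)
    obtain rfl : m = n := by have := level_eq_add_of_walk hlev' hp; omega
    exact ⟨p 0, ⟨hpV, hp0⟩, p, rfl, hp, hpA⟩
  obtain ⟨g, ⟨hgV, -⟩, hg⟩ := exists_mem_forall_of_finite
    ((finite_setOf_fst_eq (K + 1)).subset fun _ hv => hv.2)
    (fun _ => HasAvoidingWalk.antitone) hwalks
  obtain ⟨f, hf0, hf, hfA⟩ := HasAvoidingWalk.exists_chain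
    (fun v : ℕ × Q => (finite_setOf_fst_eq (v.1 + 1)).subset fun w hw => hlev' v w hw) hg
  obtain ⟨p, hp0, hp, N, hpN⟩ := exists_chain_of_reflTransGen (hreach g hgV) hf0 hf
  refine h p hp0 hp ((Set.finite_Iio N).subset fun k hk => ?_)
  by_contra hkN
  obtain ⟨j, rfl⟩ := Nat.exists_eq_add_of_le' (not_lt.1 hkN)
  exact hfA j (hpN j ▸ hk)

theorem stmt11_general {Q : Type} [Finite Q]
    (V : Set (ℕ × Q)) (E : Set ((ℕ × Q) × (ℕ × Q)))
    (hlev : ∀ e ∈ E, e.2.1 = e.1.1 + 1)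
    (init : ℕ × Q)
    (hreach : ∀ v ∈ V, Relation.ReflTransGen (fun a b => (a, b) ∈ E) init v)
    (Acc : Set (ℕ × Q))
    (h : ∀ p : ℕ → ℕ × Q, p 0 = init → (∀ k, (p k, p (k + 1)) ∈ E) →
      {k | p k ∈ Acc}.Infinite) :
    ∃ l : ℕ → ℕ, l 0 = 0 ∧ StrictMono l ∧
      ∀ i m : ℕ, ∀ p : ℕ → ℕ × Q, p 0 ∈ V → (p 0).1 = l i + 1 →
        (∀ k, k < m → (p k, p (k + 1)) ∈ E) → (p m).1 = l (i + 1) →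
        ∃ k, k ≤ m ∧ p k ∈ Acc := by
  choose F hF_lt hF using exists_level_forall_walk_meets V E hlev init hreach Acc h
  refine ⟨fun i => F^[i] 0, rfl, strictMono_nat_of_lt_succ fun i => ?_,
    fun i m p hpV hp0 hp hpm => hF _ m p hpV hp0 hp ?_⟩
  · rw [Function.iterate_succ_apply']
    exact hF_lt _
  · rwa [← Function.iterate_succ_apply' F]

/-- If every infinite path from the root of a rooted, finitely branching,
leveled graph over `ℕ × Q` (`Q` finite) visits `Acc` infinitely often, then
there is a strictly increasing sequence of levels `ℓ_0 = 0 < ℓ_1 < ...` such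
that every finite path from a level-`(ℓ_i + 1)` vertex to a level-`ℓ_{i+1}`
vertex visits `Acc`. -/
theorem stmt11 {Q : Type} [Finite Q]
    (V : Set (ℕ × Q)) (E : Set ((ℕ × Q) × (ℕ × Q)))
    (hEV : ∀ e ∈ E, e.1 ∈ V ∧ e.2 ∈ V)
    (hlev : ∀ e ∈ E, e.2.1 = e.1.1 + 1)
    (hfin : ∀ v : ℕ × Q, {w | (v, w) ∈ E}.Finite)
    (init : ℕ × Q) (hinit : init ∈ V) (hinit0 : init.1 = 0)
    (hreach : ∀ v ∈ V, Relation.ReflTransGen (fun a b => (a, b) ∈ E) init v)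
    (Acc : Set (ℕ × Q)) (hAcc : Acc ⊆ V)
    (h : ∀ p : ℕ → ℕ × Q, p 0 = init → (∀ k, (p k, p (k + 1)) ∈ E) →
      {k | p k ∈ Acc}.Infinite) :
    ∃ l : ℕ → ℕ, l 0 = 0 ∧ StrictMono l ∧
      ∀ i m : ℕ, ∀ p : ℕ → ℕ × Q, p 0 ∈ V → (p 0).1 = l i + 1 →
        (∀ k, k < m → (p k, p (k + 1)) ∈ E) → (p m).1 = l (i + 1) →
        ∃ k, k ≤ m ∧ p k ∈ Acc :=
  stmt11_general V E hlev init hreach Acc h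
end

section
/- Let Q be a nonempty finite set and Q' ⊆ Q nonempty. For every positive first-order Q-constraint θ (a positive sentence over monadic predicates Q with equality), there exists a positive first-order constraint θ_s over the predicate set Q ∪ 2^Q that is 2^Q-functional in one direction and simulates θ, in the following sense: (1) for every minimal model (S, I) of θ and every s ∈ S, the interpretation obtained from I by replacing I(s) with the singleton {I(s)} ⊆ 2^Q is a model of θ_s; (2) for every minimal model (S, I) of θ_s, there is a unique s ∈ S with I(s) = {Q''} for some Q'' ∈ 2^Q, and replacing I(s) by Q'' yields a model of θ. -/
/-!
A positive constraint `θ` cannot distinguish two interpretations that have, for every type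
`τ ⊆ Q`, the same number of elements of type `τ` up to `N = |vars θ| + 1`: a back-and-forth
argument extends any partial isomorphism on at most `N - 1` variables by one more element.
Hence every model of `θ` realizes exactly some basic formula with at most `N` witnesses per
type, all of whose exact models satisfy `θ`, and any element can be made one of its witnesses.
Marking that witness by its whole type, now a single predicate from `2^Q`, yields `θ_s`.
Conversely a minimal model of `θ_s` realizes one marked formula exactly; there the marked
witness is the only element with a `2^Q`-predicate, and unmarking it gives an exact model of a
basic formula entailing `θ`.
-/

/-- Positive first-order one-step constraints over a set `P` of monadic
predicates, with first-order variables drawn from `ℕ`. -/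
inductive OneStep (P : Type) : Type where
  | top : OneStep P
  | bot : OneStep P
  | atom : P → ℕ → OneStep P
  | eq : ℕ → ℕ → OneStep P
  | neq : ℕ → ℕ → OneStep P
  | and : OneStep P → OneStep P → OneStep P
  | or : OneStep P → OneStep P → OneStep P
  | ex : ℕ → OneStep P → OneStep P
  | all : ℕ → OneStep P → OneStep P

/-- Satisfaction of a one-step formula under a valuation. -/
def OSat {P S : Type} (I : S → Set P) : OneStep P → (ℕ → S) → Prop
  | .top, _ => True
  | .bot, _ => False
  | .atom q x, V => q ∈ I (V x)
  | .eq x y, V => V x = V y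
  | .neq x y, V => V x ≠ V y
  | .and θ η, V => OSat I θ V ∧ OSat I η V
  | .or θ η, V => OSat I θ V ∨ OSat I η V
  | .ex x θ, V => ∃ s : S, OSat I θ (Function.update V x s)
  | .all x θ, V => ∀ s : S, OSat I θ (Function.update V x s)

/-- Satisfaction of a constraint (sentence) by a one-step interpretation. -/
def SatC {P S : Type} (I : S → Set P) (θ : OneStep P) : Prop :=
  ∀ V : ℕ → S, OSat I θ V

/-- A basic formula `θ=(T_∃, T_∀)`, given by the list of its existential types
and the list of its universal types. -/
structure BasicFormula (P : Type) where
  ex : List (Set P)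
  fa : List (Set P)

/-- Satisfaction of a basic formula: pairwise distinct witnesses realizing the
existential types, all other elements realizing some universal type. -/
def SatB {P S : Type} (I : S → Set P) (b : BasicFormula P) : Prop :=
  ∃ x : Fin b.ex.length → S, Function.Injective x ∧
    (∀ i, b.ex.get i ⊆ I (x i)) ∧
    ∀ y : S, (∀ i, y ≠ x i) → ∃ B ∈ b.fa, B ⊆ I y

/-- Satisfaction of a disjunction of basic formulas. -/
def SatD {P S : Type} (I : S → Set P) (L : List (BasicFormula P)) : Prop :=
  ∃ b ∈ L, SatB I b

/-- A basic formula over the predicates `Q ∪ 2^Q` is `2^Q`-functional in one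
direction: exactly one existential type is a singleton consisting of an element
of `2^Q`, and no other occurring type contains elements of `2^Q`. -/
def FunctionalOneDir {Q : Type} (b : BasicFormula (Q ⊕ Set Q)) : Prop :=
  ∃ i : Fin b.ex.length,
    (∃ Q'' : Set Q, b.ex.get i = {Sum.inr Q''}) ∧
    (∀ j : Fin b.ex.length, j ≠ i → ∀ a ∈ b.ex.get j, ∃ q : Q, a = Sum.inl q) ∧
    (∀ B ∈ b.fa, ∀ a ∈ B, ∃ q : Q, a = Sum.inl q)

/-- `(S, I)` is a minimal model for the satisfaction predicate `Sat`. -/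
def MinimalModel {P S : Type} (Sat : (S → Set P) → Prop) (I : S → Set P) : Prop :=
  Sat I ∧ ∀ I' : S → Set P, (∀ s, I' s ⊆ I s) → Sat I' → I' = I

open Set Function
open scoped Classical

noncomputable section

namespace OneStep

variable {P : Type}

def vars : OneStep P → Finset ℕ
  | top | bot => ∅
  | atom _ x => {x}
  | eq x y | neq x y => {x, y}
  | and θ η | or θ η => vars θ ∪ vars η
  | ex x θ | all x θ => insert x (vars θ)

end OneStep

namespace Set

theorem encard_image_eq_of_forall_eq_iff {α β γ : Type*} {f : α → β} {g : α → γ}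
    {B : Set α} (h : ∀ a ∈ B, ∀ b ∈ B, f a = f b ↔ g a = g b) :
    (f '' B).encard = (g '' B).encard := by
  set graph := (fun a => (f a, g a)) '' B
  have hfst : InjOn Prod.fst graph := by
    rintro _ ⟨a, ha, rfl⟩ _ ⟨b, hb, rfl⟩ hab
    simp only [Prod.mk.injEq] at hab ⊢
    exact ⟨hab, (h a ha b hb).1 hab⟩
  have hsnd : InjOn Prod.snd graph := by
    rintro _ ⟨a, ha, rfl⟩ _ ⟨b, hb, rfl⟩ hab
    simp only [Prod.mk.injEq] at hab ⊢
    exact ⟨(h a ha b hb).2 hab, hab⟩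
  calc (f '' B).encard = (Prod.fst '' graph).encard := by rw [image_image]
    _ = (Prod.snd '' graph).encard := by rw [hfst.encard_image, hsnd.encard_image]
    _ = (g '' B).encard := by rw [image_image]

theorem exists_subset_eq_or_encard_eq {α : Type*} (A : Set α) (N : ℕ) :
    ∃ T ⊆ A, T.encard ≤ N ∧ (T = A ∨ T.encard = N) := by
  by_cases hA : A.encard ≤ N
  · exact ⟨A, subset_rfl, hA, Or.inl rfl⟩
  · obtain ⟨T, hTA, hT⟩ := exists_subset_encard_eq (not_le.1 hA).le
    exact ⟨T, hTA, hT.le, Or.inr hT⟩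

end Set

section PartialIso

variable {Q S S₂ : Type} {I : S → Set Q} {I₂ : S₂ → Set Q} {N : ℕ} {A : Finset ℕ}
  {V : ℕ → S} {V₂ : ℕ → S₂}

def IsPartialIso (I : S → Set Q) (I₂ : S₂ → Set Q) (A : Finset ℕ) (V : ℕ → S)
    (V₂ : ℕ → S₂) : Prop :=
  (∀ x ∈ A, I (V x) = I₂ (V₂ x)) ∧ ∀ x ∈ A, ∀ y ∈ A, (V x = V y ↔ V₂ x = V₂ y)

theorem IsPartialIso.symm (h : IsPartialIso I I₂ A V V₂) : IsPartialIso I₂ I A V₂ V :=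
  ⟨fun x hx => (h.1 x hx).symm, fun x hx y hy => (h.2 x hx y hy).symm⟩

theorem IsPartialIso.insert_update (h : IsPartialIso I I₂ A V V₂) {x : ℕ} {s : S} {s₂ : S₂}
    (hs : I s = I₂ s₂) (hA : ∀ y ∈ A, y ≠ x → (V y = s ↔ V₂ y = s₂)) :
    IsPartialIso I I₂ (insert x A) (update V x s) (update V₂ x s₂) := by
  have mem {y} (hy : y ∈ insert x A) (hyx : y ≠ x) : y ∈ A :=
    (Finset.mem_insert.1 hy).resolve_left hyx
  refine ⟨fun y hy => ?_, fun y hy z hz => ?_⟩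
  · by_cases hyx : y = x
    · simpa [hyx] using hs
    · simpa [hyx] using h.1 y (mem hy hyx)
  · by_cases hyx : y = x <;> by_cases hzx : z = x
    · simp [hyx, hzx]
    · simpa [hyx, hzx, eq_comm] using hA z (mem hz hzx) hzx
    · simpa [hyx, hzx] using hA y (mem hy hyx) hyx
    · simpa [hyx, hzx] using h.2 y (mem hy hyx) z (mem hz hzx)

def CappedProfileEq (N : ℕ) (I : S → Set Q) (I₂ : S₂ → Set Q) : Prop :=
  ∀ τ, min (N : ℕ∞) (I ⁻¹' {τ}).encard = min (N : ℕ∞) (I₂ ⁻¹' {τ}).encard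

theorem CappedProfileEq.symm (h : CappedProfileEq N I I₂) : CappedProfileEq N I₂ I :=
  fun τ => (h τ).symm

theorem IsPartialIso.exists_extend (hprof : CappedProfileEq N I I₂) (hA : A.card < N)
    (h : IsPartialIso I I₂ A V V₂) (s : S) :
    ∃ s₂, I s = I₂ s₂ ∧ ∀ y ∈ A, (V y = s ↔ V₂ y = s₂) := by
  by_cases hs : ∃ y ∈ A, V y = s
  · obtain ⟨y₀, hy₀, rfl⟩ := hs
    exact ⟨V₂ y₀, h.1 y₀ hy₀, fun y hy => h.2 y hy y₀ hy₀⟩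
  push Not at hs
  -- `s` is new: `S₂` has more elements of type `I s` than the values of `V₂` of that type
  set B : Set ℕ := {y | y ∈ A ∧ I (V y) = I s}
  have hsB : s ∉ V '' B := fun ⟨y, hy, hys⟩ => hs y hy.1 hys
  have hB : (V '' B).encard < N :=
    calc (V '' B).encard ≤ B.encard := encard_image_le V B
      _ ≤ (A : Set ℕ).encard := encard_mono fun y hy => hy.1
      _ < N := by rw [encard_coe_eq_coe_finsetCard]; exact_mod_cast hA
  have hfresh : (V₂ '' B).encard < (I₂ ⁻¹' {I s}).encard :=
    calc (V₂ '' B).encard = (V '' B).encard :=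
          (encard_image_eq_of_forall_eq_iff fun a ha b hb => h.2 a ha.1 b hb.1).symm
      _ < (V '' B).encard + 1 :=
          (ENat.lt_add_one_iff (hB.trans (ENat.natCast_lt_top N)).ne).2 le_rfl
      _ = (insert s (V '' B)).encard := (encard_insert_of_notMem hsB).symm
      _ ≤ min (N : ℕ∞) (I ⁻¹' {I s}).encard := by
          refine le_min ?_ (encard_mono ?_)
          · rw [encard_insert_of_notMem hsB]
            exact Order.add_one_le_of_lt hB
          · rintro _ (rfl | ⟨y, hy, rfl⟩)
            exacts [rfl, hy.2]
      _ = min (N : ℕ∞) (I₂ ⁻¹' {I s}).encard := hprof _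
      _ ≤ (I₂ ⁻¹' {I s}).encard := min_le_right _ _
  obtain ⟨s₂, hs₂, hs₂B⟩ := not_subset.1 fun hsub => (encard_mono hsub).not_gt hfresh
  refine ⟨s₂, hs₂.symm, fun y hy => iff_of_false (hs y hy) fun hy₂ => hs₂B ⟨y, ⟨hy, ?_⟩, hy₂⟩⟩
  rw [h.1 y hy, hy₂, hs₂]

theorem IsPartialIso.exists_update (hprof : CappedProfileEq N I I₂) (hA : A.card < N)
    (h : IsPartialIso I I₂ A V V₂) (x : ℕ) (s : S) :
    ∃ s₂, IsPartialIso I I₂ (insert x A) (update V x s) (update V₂ x s₂) := by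
  have hsub : A.erase x ⊆ A := Finset.erase_subset x A
  have h' : IsPartialIso I I₂ (A.erase x) V V₂ :=
    ⟨fun y hy => h.1 y (hsub hy), fun y hy z hz => h.2 y (hsub hy) z (hsub hz)⟩
  obtain ⟨s₂, hs, hA'⟩ := h'.exists_extend hprof ((Finset.card_le_card hsub).trans_lt hA) s
  have hins : insert x (A.erase x) = insert x A := by
    ext y
    by_cases hyx : y = x <;> simp [hyx]
  exact ⟨s₂, hins ▸ h'.insert_update hs fun y hy _ => hA' y hy⟩

theorem IsPartialIso.back_and_forth (hprof : CappedProfileEq N I I₂) (hA : A.card < N)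
    (h : IsPartialIso I I₂ A V V₂) {x : ℕ} (hx : x ∈ A) :
    (∀ s, ∃ s₂, IsPartialIso I I₂ A (update V x s) (update V₂ x s₂)) ∧
      ∀ s₂, ∃ s, IsPartialIso I I₂ A (update V x s) (update V₂ x s₂) := by
  rw [← Finset.insert_eq_of_mem hx]
  refine ⟨h.exists_update hprof hA x, fun s₂ => ?_⟩
  obtain ⟨s, h'⟩ := h.symm.exists_update hprof.symm hA x s₂
  exact ⟨s, h'.symm⟩

end PartialIso

section Transfer

variable {Q S S₂ : Type} {I : S → Set Q} {I₂ : S₂ → Set Q} {N : ℕ}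

theorem osat_iff_of_isPartialIso {A : Finset ℕ} (hprof : CappedProfileEq N I I₂)
    (hA : A.card < N) (θ : OneStep Q) (hθ : θ.vars ⊆ A) (V : ℕ → S) (V₂ : ℕ → S₂)
    (h : IsPartialIso I I₂ A V V₂) : OSat I θ V ↔ OSat I₂ θ V₂ := by
  induction θ generalizing V V₂ with
  | top | bot => rfl
  | atom q x => simp only [OSat, h.1 x (hθ (by simp [OneStep.vars]))]
  | eq x y => exact h.2 x (hθ (by simp [OneStep.vars])) y (hθ (by simp [OneStep.vars]))
  | neq x y =>
    exact not_congr (h.2 x (hθ (by simp [OneStep.vars])) y (hθ (by simp [OneStep.vars])))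
  | and θ η ihθ ihη =>
    exact and_congr (ihθ (Finset.subset_union_left.trans hθ) V V₂ h)
      (ihη (Finset.subset_union_right.trans hθ) V V₂ h)
  | or θ η ihθ ihη =>
    exact or_congr (ihθ (Finset.subset_union_left.trans hθ) V V₂ h)
      (ihη (Finset.subset_union_right.trans hθ) V V₂ h)
  | ex x θ ih =>
    obtain ⟨forth, back⟩ := h.back_and_forth hprof hA (hθ (Finset.mem_insert_self x _))
    have ih' := ih ((Finset.subset_insert x _).trans hθ)
    exact ⟨fun ⟨s, hs⟩ => (forth s).imp fun _ h' => (ih' _ _ h').1 hs,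
      fun ⟨s₂, hs₂⟩ => (back s₂).imp fun _ h' => (ih' _ _ h').2 hs₂⟩
  | all x θ ih =>
    obtain ⟨forth, back⟩ := h.back_and_forth hprof hA (hθ (Finset.mem_insert_self x _))
    have ih' := ih ((Finset.subset_insert x _).trans hθ)
    exact ⟨fun H s₂ => (back s₂).elim fun s h' => (ih' _ _ h').1 (H s),
      fun H s => (forth s).elim fun s₂ h' => (ih' _ _ h').2 (H s₂)⟩

theorem exists_isPartialIso [Nonempty S] (hprof : CappedProfileEq N I I₂) (V₂ : ℕ → S₂)
    (A : Finset ℕ) (hA : A.card < N) : ∃ V, IsPartialIso I I₂ A V V₂ := by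
  induction A using Finset.induction_on with
  | empty => exact ⟨fun _ => Classical.arbitrary S, by simp [IsPartialIso]⟩
  | insert x A hx ih =>
    rw [Finset.card_insert_of_notMem hx] at hA
    obtain ⟨V, hV⟩ := ih (by omega)
    obtain ⟨s, hs⟩ := hV.symm.exists_update hprof.symm (by omega) x (V₂ x)
    rw [update_eq_self] at hs
    exact ⟨_, hs.symm⟩

theorem SatC.of_cappedProfileEq [Nonempty S] {θ : OneStep Q}
    (hprof : CappedProfileEq (θ.vars.card + 1) I I₂) (h : SatC I θ) : SatC I₂ θ := by
  intro V₂
  obtain ⟨V, hV⟩ := exists_isPartialIso hprof V₂ θ.vars (Nat.lt_succ_self _)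
  exact (osat_iff_of_isPartialIso hprof (Nat.lt_succ_self _) θ subset_rfl V V₂ hV).1 (h V)

end Transfer

section ExactWitness

variable {P S S₂ : Type} {I : S → Set P} {I₂ : S₂ → Set P} {b : BasicFormula P}
  {ws : List S}

def ExactWitness (I : S → Set P) (b : BasicFormula P) (ws : List S) : Prop :=
  ws.Nodup ∧ ws.map I = b.ex ∧ ∀ y ∉ ws, I y ∈ b.fa

theorem ExactWitness.satB (h : ExactWitness I b ws) : SatB I b := by
  obtain ⟨ex, fa⟩ := b
  obtain ⟨hnd, rfl, hfa⟩ := h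
  refine ⟨fun i => ws.get (i.cast (List.length_map _)), fun i j hij => ?_, fun i => ?_,
    fun y hy => ⟨I y, hfa y fun hyws => ?_, subset_rfl⟩⟩
  · exact Fin.cast_injective _ (hnd.get_inj_iff.1 hij)
  · simp
  · obtain ⟨i, rfl⟩ := List.mem_iff_get.1 hyws
    exact hy (i.cast (List.length_map _).symm) rfl

theorem SatB.exists_exactWitness (h : SatB I b) :
    ∃ I' : S → Set P, (∀ s, I' s ⊆ I s) ∧ ∃ ws, ExactWitness I' b ws := by
  obtain ⟨x, hx, hex, hfa⟩ := h
  have (y : S) : ∃ B : Set P, (∀ i, y ≠ x i) → B ∈ b.fa ∧ B ⊆ I y := by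
    by_cases hy : ∀ i, y ≠ x i
    · obtain ⟨B, hB, hBy⟩ := hfa y hy
      exact ⟨B, fun _ => ⟨hB, hBy⟩⟩
    · exact ⟨∅, fun h => (hy h).elim⟩
  choose B hB using this
  refine ⟨extend x b.ex.get B, fun s => ?_, List.ofFn x, List.nodup_ofFn.2 hx, ?_,
    fun y hy => ?_⟩
  · by_cases hs : ∃ i, x i = s
    · obtain ⟨i, rfl⟩ := hs
      rw [hx.extend_apply]
      exact hex i
    · rw [extend_apply' _ _ _ hs]
      exact (hB s fun i h => hs ⟨i, h.symm⟩).2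
  · rw [List.map_ofFn]
    exact (congrArg List.ofFn (funext (hx.extend_apply _ _))).trans (List.ofFn_get b.ex)
  · have hy' : ∀ i, y ≠ x i := fun i h => hy (List.mem_ofFn.2 ⟨i, h.symm⟩)
    rw [extend_apply' _ _ _ fun ⟨i, h⟩ => hy' i h.symm]
    exact (hB y hy').1

theorem MinimalModel.exists_exactWitness {L : List (BasicFormula P)}
    (h : MinimalModel (fun J => SatD J L) I) : ∃ b ∈ L, ∃ ws, ExactWitness I b ws := by
  obtain ⟨⟨b, hbL, hb⟩, hmin⟩ := h
  obtain ⟨I', hI', ws, hws⟩ := hb.exists_exactWitness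
  obtain rfl := hmin I' hI' ⟨b, hbL, hws.satB⟩
  exact ⟨b, hbL, ws, hws⟩

def BasicFormula.Saturated (N : ℕ) (b : BasicFormula P) : Prop :=
  ∀ τ ∈ b.fa, N ≤ b.ex.count τ

theorem encard_preimage_inter_eq_count (hws : ws.Nodup) (I : S → Set P) (τ : Set P) :
    (I ⁻¹' {τ} ∩ {y | y ∈ ws}).encard = (ws.map I).count τ := by
  have : I ⁻¹' {τ} ∩ {y | y ∈ ws} = ↑(ws.toFinset.filter fun y => I y = τ) := by
    ext y
    simp [and_comm]
  rw [this, encard_coe_eq_coe_finsetCard, hws.card_eq_countP, List.count, List.countP_map]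
  congr 2

theorem ExactWitness.min_encard_preimage {N : ℕ} (hb : b.Saturated N)
    (h : ExactWitness I b ws) (τ : Set P) :
    min (N : ℕ∞) (I ⁻¹' {τ}).encard = min (N : ℕ∞) (b.ex.count τ) := by
  have hcount := h.2.1 ▸ encard_preimage_inter_eq_count h.1 I τ
  by_cases hτ : τ ∈ b.fa
  · have hN : (N : ℕ∞) ≤ b.ex.count τ := by exact_mod_cast hb τ hτ
    rw [min_eq_left hN, min_eq_left (hN.trans (hcount ▸ encard_mono inter_subset_left))]
  · have hsub : I ⁻¹' {τ} ⊆ {y | y ∈ ws} := fun y hy =>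
      by_contra fun hy' => hτ (hy ▸ h.2.2 y hy')
    rw [← hcount, inter_eq_left.2 hsub]

theorem ExactWitness.cappedProfileEq {N : ℕ} {ws₂ : List S₂} (hb : b.Saturated N)
    (h : ExactWitness I b ws) (h₂ : ExactWitness I₂ b ws₂) : CappedProfileEq N I I₂ :=
  fun τ => (h.min_encard_preimage hb τ).trans (h₂.min_encard_preimage hb τ).symm

end ExactWitness

section Simulation

variable {Q S : Type}

def BasicFormula.ExactlyEntails (b : BasicFormula Q) (θ : OneStep Q) : Prop :=
  ∀ (S : Type) [Nonempty S] (I : S → Set Q) (ws : List S), ExactWitness I b ws → SatC I θ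

theorem BasicFormula.finite_setOf_length_le [Finite Q] (M : ℕ) :
    {b : BasicFormula Q | b.ex.length ≤ M ∧ b.fa.length ≤ M}.Finite := by
  refine (((List.finite_length_le (Set Q) M).prod (List.finite_length_le (Set Q) M)).image
    fun p => (⟨p.1, p.2⟩ : BasicFormula Q)).subset ?_
  rintro ⟨ex, fa⟩ hb
  exact ⟨(ex, fa), hb, rfl⟩

theorem exists_saturated_witnesses [Finite Q] (I : S → Set Q) (N : ℕ) (s₀ : S) :
    ∃ ws : List S, (s₀ :: ws).Nodup ∧ ws.length ≤ N * Nat.card (Set Q) ∧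
      ∀ y ∉ s₀ :: ws, N ≤ (ws.map I).count (I y) := by
  choose T hTA hTN hT using
    fun τ : Set Q => exists_subset_eq_or_encard_eq (I ⁻¹' {τ} \ {s₀}) N
  have hU : (⋃ τ, T τ).Finite := finite_iUnion fun τ => finite_of_encard_le_coe (hTN τ)
  have hmem {y : S} : y ∈ hU.toFinset.toList ↔ ∃ τ, y ∈ T τ := by simp
  refine ⟨hU.toFinset.toList, List.nodup_cons.2 ⟨?_, Finset.nodup_toList _⟩, ?_,
    fun y hy => ?_⟩
  · exact fun h => (hmem.1 h).elim fun τ hτ => (hTA τ hτ).2 rfl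
  · have := Fintype.ofFinite (Set Q)
    suffices (hU.toFinset.toList.length : ℕ∞) ≤ N * Nat.card (Set Q) by exact_mod_cast this
    calc (hU.toFinset.toList.length : ℕ∞) = (⋃ τ, T τ).encard := by
          rw [Finset.length_toList, hU.encard_eq_coe_toFinset_card]
      _ ≤ ∑ τ, (T τ).encard := encard_iUnion_le_of_fintype T
      _ ≤ ∑ _ : Set Q, (N : ℕ∞) := Finset.sum_le_sum fun τ _ => hTN τ
      _ = N * Nat.card (Set Q) := by simp [Nat.card_eq_fintype_card, mul_comm]
  · obtain ⟨hys₀, hyU⟩ := not_or.1 (List.mem_cons.not.1 hy)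
    have hTy : (T (I y)).encard = N := (hT (I y)).resolve_left fun h =>
      hyU (hmem.2 ⟨I y, h ▸ ⟨rfl, hys₀⟩⟩)
    suffices (N : ℕ∞) ≤ (hU.toFinset.toList.map I).count (I y) by exact_mod_cast this
    rw [← encard_preimage_inter_eq_count (Finset.nodup_toList _), ← hTy]
    exact encard_mono fun z hz => ⟨(hTA _ hz).1, hmem.2 ⟨_, hz⟩⟩

/-- `θ` cannot tell apart more than `θ.vars.card + 1` elements of one type
(`SatC.of_cappedProfileEq`), so no more witnesses per type are needed. -/
def simulationBound (θ : OneStep Q) : ℕ :=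
  (θ.vars.card + 1) * Nat.card (Set Q)

def pointedNormalForms (θ : OneStep Q) : Set (Set Q × BasicFormula Q) :=
  {p | p.2.ex.length ≤ simulationBound θ ∧ p.2.fa.length ≤ simulationBound θ ∧
    BasicFormula.ExactlyEntails ⟨p.1 :: p.2.ex, p.2.fa⟩ θ}

theorem finite_pointedNormalForms [Finite Q] (θ : OneStep Q) :
    (pointedNormalForms θ).Finite :=
  (finite_univ.prod (BasicFormula.finite_setOf_length_le _)).subset
    fun _ hp => ⟨trivial, hp.1, hp.2.1⟩

theorem exists_mem_pointedNormalForms [Finite Q] [Nonempty S] {θ : OneStep Q}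
    {I : S → Set Q} (h : SatC I θ) (s₀ : S) :
    ∃ p ∈ pointedNormalForms θ, ∃ ws, ExactWitness I ⟨p.1 :: p.2.ex, p.2.fa⟩ (s₀ :: ws) := by
  obtain ⟨ws, hnd, hlen, hsat⟩ := exists_saturated_witnesses I (θ.vars.card + 1) s₀
  set F : Finset (Set Q) := (toFinite {τ | ∃ y ∉ s₀ :: ws, I y = τ}).toFinset
  have hb : ExactWitness I ⟨(s₀ :: ws).map I, F.toList⟩ (s₀ :: ws) :=
    ⟨hnd, rfl, fun y hy => by
      simp only [F, Finset.mem_toList, Finite.mem_toFinset]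
      exact ⟨y, hy, rfl⟩⟩
  have hb_sat : BasicFormula.Saturated (θ.vars.card + 1) ⟨(s₀ :: ws).map I, F.toList⟩ := by
    intro τ hτ
    obtain ⟨y, hy, rfl⟩ : ∃ y ∉ s₀ :: ws, I y = τ := by simpa [F] using hτ
    exact (hsat y hy).trans List.count_le_count_cons
  have hF : F.toList.length ≤ simulationBound θ := by
    rw [Finset.length_toList, ← Nat.card_eq_finsetCard, simulationBound]
    exact (Finite.card_subtype_le _).trans (Nat.le_mul_of_pos_left _ (Nat.succ_pos _))
  exact ⟨(I s₀, ⟨ws.map I, F.toList⟩), ⟨by simpa [simulationBound] using hlen, hF,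
    fun S₂ _ I₂ ws₂ h₂ => h.of_cappedProfileEq (hb.cappedProfileEq hb_sat h₂)⟩, ws, hb⟩

def markedFormula (τ₀ : Set Q) (b : BasicFormula Q) : BasicFormula (Q ⊕ Set Q) :=
  ⟨{Sum.inr τ₀} :: b.ex.map (image Sum.inl), b.fa.map (image Sum.inl)⟩

/-- The constraint `θ_s`. -/
def simulation [Finite Q] (θ : OneStep Q) : List (BasicFormula (Q ⊕ Set Q)) :=
  (finite_pointedNormalForms θ).toFinset.toList.map fun p => markedFormula p.1 p.2

theorem mem_simulation [Finite Q] {θ : OneStep Q} {bv : BasicFormula (Q ⊕ Set Q)} :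
    bv ∈ simulation θ ↔ ∃ p ∈ pointedNormalForms θ, markedFormula p.1 p.2 = bv := by
  simp [simulation]

theorem functionalOneDir_markedFormula (τ₀ : Set Q) (b : BasicFormula Q) :
    FunctionalOneDir (markedFormula τ₀ b) := by
  refine ⟨⟨0, Nat.succ_pos _⟩, ⟨τ₀, rfl⟩, ?_, fun B hB a ha => ?_⟩
  · rintro ⟨_ | j, hj⟩ hne a ha
    · exact absurd rfl hne
    · have ha' : a ∈ (b.ex.map (image Sum.inl))[j]'(Nat.lt_of_succ_lt_succ hj) := ha
      simp only [List.getElem_map, mem_image] at ha'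
      obtain ⟨q, -, rfl⟩ := ha'
      exact ⟨q, rfl⟩
  · obtain ⟨τ, -, rfl⟩ := List.mem_map.1 hB
    obtain ⟨q, -, rfl⟩ := ha
    exact ⟨q, rfl⟩

theorem ExactWitness.satB_markedFormula {τ₀ : Set Q} {b : BasicFormula Q} {I : S → Set Q}
    {s₀ : S} {ws : List S} (h : ExactWitness I ⟨τ₀ :: b.ex, b.fa⟩ (s₀ :: ws))
    {J : S → Set (Q ⊕ Set Q)} (hJ₀ : J s₀ = {Sum.inr (I s₀)})
    (hJ : ∀ s, s ≠ s₀ → J s = Sum.inl '' I s) : SatB J (markedFormula τ₀ b) := by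
  obtain ⟨hnd, hmap, hfa⟩ := h
  obtain ⟨rfl, hex⟩ := List.cons.inj hmap
  have hs₀ : s₀ ∉ ws := (List.nodup_cons.1 hnd).1
  refine ExactWitness.satB ⟨hnd, ?_, fun y hy => ?_⟩
  · simp only [markedFormula, List.map_cons, hJ₀, ← hex, List.map_map]
    exact congrArg _ (List.map_congr_left fun s hs => hJ s (ne_of_mem_of_not_mem hs hs₀))
  · rw [hJ y (List.ne_of_not_mem_cons hy)]
    exact List.mem_map_of_mem (hfa y hy)

theorem ExactWitness.of_markedFormula {τ₀ : Set Q} {b : BasicFormula Q}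
    {J : S → Set (Q ⊕ Set Q)} {ws : List S} (h : ExactWitness J (markedFormula τ₀ b) ws) :
    ∃ m ws', ws = m :: ws' ∧ J m = {Sum.inr τ₀} ∧ (∀ s Q'', J s = {Sum.inr Q''} → s = m) ∧
      ∀ I : S → Set Q, I m = τ₀ → (∀ s, s ≠ m → I s = Sum.inl ⁻¹' J s) →
        ExactWitness I ⟨τ₀ :: b.ex, b.fa⟩ ws := by
  obtain ⟨hnd, hmap, hfa⟩ := h
  obtain ⟨m, ws', rfl, hm, hex⟩ := List.map_eq_cons_iff.1 hmap
  have hm' : m ∉ ws' := (List.nodup_cons.1 hnd).1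
  refine ⟨m, ws', rfl, hm, fun s Q'' hs => ?_, fun I hIm hI => ⟨hnd, ?_, fun y hy => ?_⟩⟩
  · by_contra hsm
    have hJs : J s ∈ b.ex.map (image Sum.inl) ∨ J s ∈ b.fa.map (image Sum.inl) := by
      by_cases hs' : s ∈ ws'
      · exact Or.inl (hex ▸ List.mem_map_of_mem hs')
      · exact Or.inr (hfa s (by simp [hsm, hs']))
    obtain ⟨τ, -, hτ⟩ | ⟨τ, -, hτ⟩ := hJs.imp List.mem_map.1 List.mem_map.1 <;>
    · have hinr : Sum.inr Q'' ∈ J s := hs ▸ rfl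
      simp [← hτ] at hinr
  · rw [List.map_cons, hIm, List.map_congr_left fun s hs => hI s (ne_of_mem_of_not_mem hs hm')]
    calc τ₀ :: ws'.map (fun s => Sum.inl ⁻¹' J s)
        _ = τ₀ :: (ws'.map J).map (preimage Sum.inl) := by rw [List.map_map]; rfl
        _ = τ₀ :: b.ex := by simp [hex, comp_def, preimage_image_eq _ Sum.inl_injective]
  · obtain ⟨τ, hτ, hJy⟩ := List.mem_map.1 (hfa y hy)
    rw [hI y (List.ne_of_not_mem_cons hy), ← hJy, preimage_image_eq _ Sum.inl_injective]
    exact hτ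

end Simulation

end

theorem stmt17_general {Q : Type} [Finite Q] (θ : OneStep Q) :
    ∃ L : List (BasicFormula (Q ⊕ Set Q)),
      (∀ b ∈ L, FunctionalOneDir b) ∧
      (∀ (S : Type) [Nonempty S], ∀ I : S → Set Q,
        MinimalModel (fun J => SatC J θ) I →
        ∀ s₀ : S, ∀ J : S → Set (Q ⊕ Set Q),
          (J s₀ = {Sum.inr (I s₀)} ∧ ∀ s, s ≠ s₀ → J s = Sum.inl '' I s) →
          SatD J L) ∧
      (∀ (S : Type) [Nonempty S], ∀ J : S → Set (Q ⊕ Set Q),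
        MinimalModel (fun J' => SatD J' L) J →
        (∃! s₀ : S, ∃ Q'' : Set Q, J s₀ = {Sum.inr Q''}) ∧
        (∀ (s₀ : S) (Q'' : Set Q), J s₀ = {Sum.inr Q''} →
          ∀ I : S → Set Q,
            (I s₀ = Q'' ∧ ∀ s, s ≠ s₀ → I s = Sum.inl ⁻¹' J s) →
            SatC I θ)) := by
  refine ⟨simulation θ, fun bv hbv => ?_, fun S _ I hI s₀ J ⟨hJ₀, hJ⟩ => ?_,
    fun S _ J hJ => ?_⟩
  · obtain ⟨p, -, rfl⟩ := mem_simulation.1 hbv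
    exact functionalOneDir_markedFormula p.1 p.2
  · obtain ⟨p, hp, ws, hws⟩ := exists_mem_pointedNormalForms hI.1 s₀
    exact ⟨_, mem_simulation.2 ⟨p, hp, rfl⟩, hws.satB_markedFormula hJ₀ hJ⟩
  · obtain ⟨bv, hbv, ws, hws⟩ := hJ.exists_exactWitness
    obtain ⟨⟨τ₀, b⟩, hp, rfl⟩ := mem_simulation.1 hbv
    obtain ⟨m, ws', rfl, hm, hunique, hunmark⟩ := hws.of_markedFormula
    refine ⟨⟨m, ⟨τ₀, hm⟩, fun s ⟨Q'', hs⟩ => hunique s Q'' hs⟩,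
      fun s₀ Q'' hs₀ I ⟨hI₀, hI⟩ => ?_⟩
    obtain rfl := hunique s₀ Q'' hs₀
    obtain rfl : Q'' = τ₀ := by simpa [hm] using hs₀.symm
    exact hp.2.2 S I _ (hunmark I hI₀ hI)

/-- For every positive first-order `Q`-constraint `θ` there is a constraint
`θ_s` over `Q ∪ 2^Q` (a disjunction of basic formulas) that is `2^Q`-functional
in one direction and simulates `θ`: (1) for every minimal model `(S, I)` of `θ`
and every `s₀ ∈ S`, replacing `I(s₀)` by the singleton `{I(s₀)} ⊆ 2^Q` (and
embedding the rest into `Q ∪ 2^Q`) yields a model of `θ_s`; (2) for every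
minimal model `(S, J)` of `θ_s` there is a unique `s₀` with `J(s₀) = {Q''}`
for some `Q'' ∈ 2^Q`, and replacing `J(s₀)` by `Q''` yields a model of `θ`. -/
theorem stmt17 {Q : Type} [Nonempty Q] [Finite Q]
    (Q' : Set Q) (hQ' : Q'.Nonempty) (θ : OneStep Q) :
    ∃ L : List (BasicFormula (Q ⊕ Set Q)),
      (∀ b ∈ L, FunctionalOneDir b) ∧
      (∀ (S : Type) [Nonempty S], ∀ I : S → Set Q,
        MinimalModel (fun J => SatC J θ) I →
        ∀ s₀ : S, ∀ J : S → Set (Q ⊕ Set Q),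
          (J s₀ = {Sum.inr (I s₀)} ∧ ∀ s, s ≠ s₀ → J s = Sum.inl '' I s) →
          SatD J L) ∧
      (∀ (S : Type) [Nonempty S], ∀ J : S → Set (Q ⊕ Set Q),
        MinimalModel (fun J' => SatD J' L) J →
        (∃! s₀ : S, ∃ Q'' : Set Q, J s₀ = {Sum.inr Q''}) ∧
        (∀ (s₀ : S) (Q'' : Set Q), J s₀ = {Sum.inr Q''} →
          ∀ I : S → Set Q,
            (I s₀ = Q'' ∧ ∀ s, s ≠ s₀ → I s = Sum.inl ⁻¹' J s) →
            SatC I θ)) :=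
  stmt17_general θ
end
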